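/- arXiv:1708.05408 — 3 statements merged into one kernel-verified Lean document; each statement's English description precedes it below -/
import Mathlib

section
/- For k ≥ 3, the subgraph of the grid Pk □ Pk induced by the vertex set (A(1) ∪ A(2)) ∪ (B(1) ∪ B(2)) (the union of the first two rows and first two columns) is weakly 2-linked. -/
open SimpleGraph

/-- The grid graph `Pm □ Pk` (0-indexed coordinates): `(i,j)` and `(p,q)` are
adjacent iff `|i-p| + |j-q| = 1`. -/
def grid (m k : ℕ) : SimpleGraph (Fin m × Fin k) where
  Adj u v := ((u.1 : ℤ) - v.1).natAbs + ((u.2 : ℤ) - v.2).natAbs = 1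
  symm := ⟨by intro u v h; omega⟩
  loopless := ⟨by intro u h; simp at h⟩

/-- A graph is weakly 2-linked if any two terminal pairs can be joined by
edge-disjoint paths. -/
def Weakly2Linked {V : Type*} (G : SimpleGraph V) : Prop :=
  ∀ u1 v1 u2 v2 : V, ∃ (p : G.Walk u1 v1) (q : G.Walk u2 v2),
    p.IsPath ∧ q.IsPath ∧ p.edges.Disjoint q.edges

/-!
The graph is a thick "L": its boundary is a Hamiltonian cycle (of length `4k - 4`) and its
remaining edges are the rungs `(0,j) – (1,j)` and `(i,0) – (i,1)` across the two arms, two of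
which meet at the degree-4 vertex `(1,1)`.

Two terminal pairs that do not interleave along a cycle are joined by disjoint arcs of it. If they
interleave, in cyclic order `a, c, b, d`, a chord from `c` that lands beyond `b` (on the arc
through `d`) already separates them: join `a` to `b` along the arc through `c`, and `c` to `d`
by the chord followed by an arc on the far side. The same works with any of the four terminals
in the role of `c`. Every vertex except the five of degree 2 has a rung that is a chord of the
boundary, and the few interleaving configurations in which no terminal has a useful rung are
routed through `(1,1)`, entering it by its two rungs, one for each path.
-/

theorem add_one_mod_eq_or {n : ℕ} (hn : 1 < n) (t : ℕ) :
    t % n + 1 < n ∧ (t + 1) % n = t % n + 1 ∨ t % n + 1 = n ∧ (t + 1) % n = 0 := by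
  have := Nat.mod_lt t (by omega : 0 < n)
  rw [Nat.add_mod_eq_ite, Nat.mod_eq_of_lt hn]
  split_ifs <;> omega

namespace SimpleGraph

variable {V : Type*} {G : SimpleGraph V}

def EdgeDisjointWalks (G : SimpleGraph V) (u₁ v₁ u₂ v₂ : V) : Prop :=
  ∃ (p : G.Walk u₁ v₁) (q : G.Walk u₂ v₂), p.edges.Disjoint q.edges

namespace EdgeDisjointWalks

variable {u₁ v₁ u₂ v₂ : V}

theorem symm (h : G.EdgeDisjointWalks u₁ v₁ u₂ v₂) : G.EdgeDisjointWalks u₂ v₂ u₁ v₁ :=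
  let ⟨p, q, hpq⟩ := h
  ⟨q, p, hpq.symm⟩

theorem reverse_left (h : G.EdgeDisjointWalks u₁ v₁ u₂ v₂) : G.EdgeDisjointWalks v₁ u₁ u₂ v₂ :=
  let ⟨p, q, hpq⟩ := h
  ⟨p.reverse, q, by rw [Walk.edges_reverse]; exact fun e he => hpq (List.mem_reverse.1 he)⟩

theorem reverse_right (h : G.EdgeDisjointWalks u₁ v₁ u₂ v₂) : G.EdgeDisjointWalks u₁ v₁ v₂ u₂ :=
  h.symm.reverse_left.symm

end EdgeDisjointWalks

theorem weakly2Linked_of_edgeDisjointWalks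
    (h : ∀ u₁ v₁ u₂ v₂, G.EdgeDisjointWalks u₁ v₁ u₂ v₂) : Weakly2Linked G := by
  classical
  intro u₁ v₁ u₂ v₂
  obtain ⟨p, q, hpq⟩ := h u₁ v₁ u₂ v₂
  exact ⟨p.bypass, q.bypass, p.bypass_isPath, q.bypass_isPath,
    fun e hp hq => hpq (p.edges_bypass_subset_edges hp) (q.edges_bypass_subset_edges hq)⟩

structure IsCycleEmbedding (G : SimpleGraph V) (n : ℕ) (f : ℕ → V) : Prop where
  adj : ∀ t, G.Adj (f t) (f (t + 1))
  eq_iff : ∀ s t, f s = f t ↔ s % n = t % n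
  three_le : 3 ≤ n

def cycEdge (f : ℕ → V) (t : ℕ) : Sym2 V := s(f t, f (t + 1))

def IsChord (G : SimpleGraph V) (f : ℕ → V) (x y : ℕ) : Prop :=
  G.Adj (f x) (f y) ∧ ∀ t, s(f x, f y) ≠ cycEdge f t

theorem IsChord.congr {f : ℕ → V} {x y x' y' : ℕ} (h : IsChord G f x y) (hx : f x = f x')
    (hy : f y = f y') : IsChord G f x' y' := by
  unfold IsChord cycEdge at *
  rwa [← hx, ← hy]

/-- For pairs `(a, b)` and `(c, d)` interleaving as `a < c < b < d`: some terminal has an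
`R`-neighbour beyond the other pair, i.e. on the cyclic arc between the other two terminals that
contains its partner. -/
inductive HasUncrossingChord (R : ℕ → ℕ → Prop) (a c b d : ℕ) : Prop
  | at_c (r : ℕ) : R c r → r ≤ a ∨ b ≤ r → HasUncrossingChord R a c b d
  | at_b (r : ℕ) : R b r → r ≤ c ∨ d ≤ r → HasUncrossingChord R a c b d
  | at_a (r : ℕ) : R a r → c ≤ r → r ≤ d → HasUncrossingChord R a c b d
  | at_d (r : ℕ) : R d r → a ≤ r → r ≤ b → HasUncrossingChord R a c b d

namespace IsCycleEmbedding

variable {n : ℕ} {f : ℕ → V} (hC : G.IsCycleEmbedding n f)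
include hC

theorem apply_add_period (t : ℕ) : f (t + n) = f t :=
  (hC.eq_iff _ _).2 (by simp)

theorem eq_of_apply_eq {w s t : ℕ} (hs : w ≤ s ∧ s < w + n) (ht : w ≤ t ∧ t < w + n)
    (h : f s = f t) : s = t :=
  Nat.ModEq.eq_of_abs_lt ((hC.eq_iff s t).1 h) (by rw [abs_lt]; omega)

theorem cycEdge_injOn {w s t : ℕ} (hs : w ≤ s ∧ s < w + n) (ht : w ≤ t ∧ t < w + n)
    (h : cycEdge f s = cycEdge f t) : s = t := by
  rcases Sym2.eq_iff.1 h with ⟨h₁, -⟩ | ⟨h₁, h₂⟩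
  · exact hC.eq_of_apply_eq hs ht h₁
  have h₁ : s ≡ t + 1 [MOD n] := (hC.eq_iff _ _).1 h₁
  have h₂ : s + 1 ≡ t [MOD n] := (hC.eq_iff _ _).1 h₂
  have h2 : 2 ≡ 0 [MOD n] := Nat.ModEq.add_left_cancel' s ((h₂.add_right 1).trans h₁.symm)
  have := Nat.le_of_dvd two_pos (Nat.modEq_zero_iff_dvd.1 h2)
  have := hC.three_le
  omega

theorem isChord_of_adj {x y : ℕ} (hx : x < n) (hy : y < n) (hxy : G.Adj (f x) (f y))
    (h₁ : x + 1 ≠ y) (h₂ : y + 1 ≠ x) (h₃ : x + 1 ≠ y + n) (h₄ : y + 1 ≠ x + n) :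
    IsChord G f x y := by
  refine ⟨hxy, fun t ht => ?_⟩
  have hsucc := add_one_mod_eq_or (n := n) (by have := hC.three_le; omega) t
  have hlt := Nat.mod_lt t (by have := hC.three_le; omega : 0 < n)
  rcases Sym2.eq_iff.1 ht with ⟨e₁, e₂⟩ | ⟨e₁, e₂⟩ <;>
    rw [hC.eq_iff, Nat.mod_eq_of_lt hx] at e₁ <;> rw [hC.eq_iff, Nat.mod_eq_of_lt hy] at e₂ <;>
    generalize t % n = r at * <;> generalize (t + 1) % n = r' at * <;> omega

def arc (i : ℕ) : (m : ℕ) → G.Walk (f i) (f (i + m))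
  | 0 => Walk.nil
  | m + 1 => (arc i m).concat (hC.adj (i + m))

def arcBetween (i j : ℕ) : G.Walk (f i) (f j) :=
  if h : i ≤ j then (hC.arc i (j - i)).copy rfl (by rw [Nat.add_sub_cancel' h])
  else ((hC.arc j (i - j)).copy rfl (by rw [Nat.add_sub_cancel' (by omega)])).reverse

theorem mem_edges_arc {i m : ℕ} {e : Sym2 V} (he : e ∈ (hC.arc i m).edges) :
    ∃ t, i ≤ t ∧ t < i + m ∧ e = cycEdge f t := by
  induction m with
  | zero => simp [arc] at he
  | succ m ih =>
    rw [arc, Walk.edges_concat, List.concat_eq_append, List.mem_append, List.mem_singleton] at he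
    rcases he with he | rfl
    · obtain ⟨t, h₁, h₂, rfl⟩ := ih he
      exact ⟨t, h₁, by omega, rfl⟩
    · exact ⟨i + m, by omega, by omega, rfl⟩

theorem mem_edges_arcBetween {i j : ℕ} {e : Sym2 V} (he : e ∈ (hC.arcBetween i j).edges) :
    ∃ t, min i j ≤ t ∧ t < max i j ∧ e = cycEdge f t := by
  unfold arcBetween at he
  split_ifs at he with h
  · obtain ⟨t, h₁, h₂, rfl⟩ := hC.mem_edges_arc (by simpa using he)
    exact ⟨t, by omega, by omega, rfl⟩
  · obtain ⟨t, h₁, h₂, rfl⟩ := hC.mem_edges_arc (by simpa using he)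
    exact ⟨t, by omega, by omega, rfl⟩

def viaEdge {p h : ℕ} (hph : G.Adj (f p) (f h)) (x y : ℕ) : G.Walk (f x) (f y) :=
  (hC.arcBetween x p).append (hph.toWalk.append (hC.arcBetween h y))

theorem mem_edges_viaEdge {p h x y : ℕ} {hph : G.Adj (f p) (f h)} {e : Sym2 V}
    (he : e ∈ (hC.viaEdge hph x y).edges) :
    e = s(f p, f h) ∨ ∃ t, (min x p ≤ t ∧ t < max x p ∨ min h y ≤ t ∧ t < max h y) ∧
      e = cycEdge f t := by
  simp only [viaEdge, Walk.edges_append, Adj.toWalk, Walk.edges_cons, Walk.edges_nil,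
    List.mem_append, List.mem_cons, List.not_mem_nil, or_false] at he
  rcases he with he | rfl | he
  · obtain ⟨t, h₁, h₂, rfl⟩ := hC.mem_edges_arcBetween he
    exact Or.inr ⟨t, Or.inl ⟨h₁, h₂⟩, rfl⟩
  · exact Or.inl rfl
  · obtain ⟨t, h₁, h₂, rfl⟩ := hC.mem_edges_arcBetween he
    exact Or.inr ⟨t, Or.inr ⟨h₁, h₂⟩, rfl⟩

theorem edgeDisjointWalks_of_le {a b c d : ℕ} (hab : a ≤ b) (hbc : b ≤ c) (hcd : c ≤ d)
    (hda : d ≤ a + n) : G.EdgeDisjointWalks (f a) (f b) (f c) (f d) := by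
  refine ⟨hC.arcBetween a b, hC.arcBetween c d, fun e he₁ he₂ => ?_⟩
  obtain ⟨s, hs₁, hs₂, rfl⟩ := hC.mem_edges_arcBetween he₁
  obtain ⟨t, ht₁, ht₂, hst⟩ := hC.mem_edges_arcBetween he₂
  have := hC.cycEdge_injOn (w := a) (by omega) (by omega) hst
  omega

theorem edgeDisjointWalks_of_chord {a b c d r : ℕ} (hab : a ≤ b) (hbd : b ≤ d)
    (hda : d ≤ a + n) (hbr : b ≤ r) (hra : r ≤ a + n) (hcr : IsChord G f c r) :
    G.EdgeDisjointWalks (f a) (f b) (f c) (f d) := by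
  refine ⟨hC.arcBetween a b, hC.viaEdge hcr.1 c d, fun e he₁ he₂ => ?_⟩
  obtain ⟨s, hs₁, hs₂, rfl⟩ := hC.mem_edges_arcBetween he₁
  rcases hC.mem_edges_viaEdge he₂ with he | ⟨t, ht, hst⟩
  · exact hcr.2 s he.symm
  · have := hC.cycEdge_injOn (w := a) (by omega) (by omega) hst
    omega

/-- The walks run `xᵢ → pᵢ → h → yᵢ`, along the cycle except for the chords `pᵢ h`. -/
theorem edgeDisjointWalks_of_hub {w x₁ p₁ y₁ x₂ p₂ y₂ h : ℕ}
    (hwin : [x₁, p₁, y₁, x₂, p₂, y₂, h].Forall fun z => w ≤ z ∧ z ≤ w + n)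
    (hp : p₁ ≠ p₂) (hp₁ : p₁ < w + n) (hp₂ : p₂ < w + n)
    (hc₁ : IsChord G f p₁ h) (hc₂ : IsChord G f p₂ h)
    (hdisj : ∀ t, (min x₁ p₁ ≤ t ∧ t < max x₁ p₁ ∨ min h y₁ ≤ t ∧ t < max h y₁) →
      ¬(min x₂ p₂ ≤ t ∧ t < max x₂ p₂ ∨ min h y₂ ≤ t ∧ t < max h y₂)) :
    G.EdgeDisjointWalks (f x₁) (f y₁) (f x₂) (f y₂) := by
  dsimp only [List.Forall] at hwin
  refine ⟨hC.viaEdge hc₁.1 x₁ y₁, hC.viaEdge hc₂.1 x₂ y₂, fun e he₁ he₂ => ?_⟩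
  rcases hC.mem_edges_viaEdge he₁ with rfl | ⟨s, hs, rfl⟩ <;>
    rcases hC.mem_edges_viaEdge he₂ with he | ⟨t, ht, he⟩
  · exact hp (hC.eq_of_apply_eq (w := w) (by omega) (by omega) (Sym2.congr_left.1 he))
  · exact hc₁.2 t he
  · exact hc₂.2 s he.symm
  · obtain rfl := hC.cycEdge_injOn (w := w) (by omega) (by omega) he
    exact hdisj s hs ht

theorem edgeDisjointWalks_of_forall_crossing
    (hcross : ∀ {a c b d}, a < c → c < b → b < d → d < n →
      G.EdgeDisjointWalks (f a) (f b) (f c) (f d))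
    {a b c d : ℕ} (ha : a < n) (hb : b < n) (hc : c < n) (hd : d < n) :
    G.EdgeDisjointWalks (f a) (f b) (f c) (f d) := by
  wlog hab : a ≤ b generalizing a b c d
  · exact (this hb ha hc hd (by omega)).reverse_left
  wlog hcd : c ≤ d generalizing a b c d
  · exact (this ha hb hd hc hab (by omega)).reverse_right
  wlog hac : a ≤ c generalizing a b c d
  · exact (this hc hd ha hb hcd hab (by omega)).symm
  rcases le_or_gt b c with hbc | hcb
  · exact hC.edgeDisjointWalks_of_le hab hbc hcd (by omega)
  rcases le_or_gt d b with hdb | hbd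
  · have := hC.edgeDisjointWalks_of_le (d := a + n) hcd hdb (by omega) (by omega)
    rw [hC.apply_add_period] at this
    exact this.symm.reverse_left
  rcases hac.eq_or_lt with rfl | hac
  · have := hC.edgeDisjointWalks_of_le (d := a + n) hab hbd.le (by omega) le_rfl
    rw [hC.apply_add_period] at this
    exact this.reverse_right
  exact hcross hac hcb hbd hd

theorem edgeDisjointWalks_of_hasUncrossingChord {R : ℕ → ℕ → Prop}
    (hR : ∀ x y, R x y → y < n ∧ IsChord G f x y) {a c b d : ℕ} (hac : a ≤ c) (hcb : c ≤ b)
    (hbd : b ≤ d) (hd : d < n) (h : HasUncrossingChord R a c b d) :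
    G.EdgeDisjointWalks (f a) (f b) (f c) (f d) := by
  have hper := hC.apply_add_period
  cases h with
  | at_c r hr hr' =>
    obtain ⟨hrn, hch⟩ := hR c r hr
    rcases hr' with hra | hbr
    · exact hC.edgeDisjointWalks_of_chord (r := r + n) (by omega) hbd (by omega) (by omega)
        (by omega) (hch.congr rfl (hper r).symm)
    · exact hC.edgeDisjointWalks_of_chord (by omega) hbd (by omega) hbr (by omega) hch
  | at_b r hr hr' =>
    obtain ⟨hrn, hch⟩ := hR b r hr
    have key : ∀ r', d ≤ r' → r' ≤ c + n → f r = f r' →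
        G.EdgeDisjointWalks (f a) (f b) (f c) (f d) := fun r' h₁ h₂ h₃ => by
      have := hC.edgeDisjointWalks_of_chord (a := c) (d := a + n) (by omega) (by omega)
        (by omega) h₁ h₂ (hch.congr rfl h₃)
      rw [hper] at this
      exact this.symm.reverse_left
    rcases hr' with hrc | hdr
    · exact key (r + n) (by omega) (by omega) (hper r).symm
    · exact key r hdr (by omega) rfl
  | at_a r hr hcr hrd =>
    obtain ⟨hrn, hch⟩ := hR a r hr
    have := hC.edgeDisjointWalks_of_chord (a := d) (c := a + n) (b := c + n) (d := b + n)
      (r := r + n) (by omega) (by omega) (by omega) (by omega) (by omega)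
      (hch.congr (hper a).symm (hper r).symm)
    simp only [hper] at this
    exact this.symm.reverse_right
  | at_d r hr har hrb =>
    obtain ⟨hrn, hch⟩ := hR d r hr
    have := hC.edgeDisjointWalks_of_chord (a := b) (c := d) (b := a + n) (d := c + n)
      (r := r + n) (by omega) (by omega) (by omega) (by omega) (by omega)
      (hch.congr rfl (hper r).symm)
    simp only [hper] at this
    exact this.reverse_left.reverse_right

end IsCycleEmbedding

end SimpleGraph

namespace TwoRowsCols

abbrev Vert (k : ℕ) : Set (Fin k × Fin k) := {v | v.1.val ≤ 1 ∨ v.2.val ≤ 1}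

abbrev graph (k : ℕ) : SimpleGraph (Vert k) := (grid k k).induce (Vert k)

variable {k : ℕ}

/-- Position `x < 4k - 4` on the boundary: row 0 from `(0,k-1)` to the corner `(0,0)`, column 0
down to `(k-1,0)`, column 1 back up to `(1,1)`, and row 1 out to `(1,k-1)`. -/
def boundaryPt (hk : 3 ≤ k) (x : ℕ) : Vert k :=
  if x ≤ k - 1 then ⟨(⟨0, by omega⟩, ⟨k - 1 - x, by omega⟩), Or.inl (by simp)⟩
  else if _ : x ≤ 2 * k - 2 then ⟨(⟨x - (k - 1), by omega⟩, ⟨0, by omega⟩), Or.inr (by simp)⟩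
  else if _ : x ≤ 3 * k - 3 then ⟨(⟨3 * k - 2 - x, by omega⟩, ⟨1, by omega⟩), Or.inr (by simp)⟩
  else if _ : x ≤ 4 * k - 5 then ⟨(⟨1, by omega⟩, ⟨x - (3 * k - 4), by omega⟩), Or.inl (by simp)⟩
  else ⟨(⟨0, by omega⟩, ⟨0, by omega⟩), Or.inl (by simp)⟩

def boundary (hk : 3 ≤ k) (t : ℕ) : Vert k := boundaryPt hk (t % (4 * k - 4))

/-- The rungs in boundary positions: `x ∈ [1, k-2]` is `(0, k-1-x)`, facing `4k-5-x`, and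
`x ∈ [k, 2k-3]` is `(x-k+1, 0)`, facing `4k-3-x`. The two outermost rungs are boundary edges. -/
def IsRung (k x y : ℕ) : Prop :=
  x + y = 4 * k - 5 ∧ (1 ≤ x ∧ x ≤ k - 2 ∨ 1 ≤ y ∧ y ≤ k - 2) ∨
  x + y = 4 * k - 3 ∧ (k ≤ x ∧ x ≤ 2 * k - 3 ∨ k ≤ y ∧ y ≤ 2 * k - 3)

theorem boundaryPt_inj (hk : 3 ≤ k) {x y : ℕ} (hx : x < 4 * k - 4) (hy : y < 4 * k - 4)
    (h : boundaryPt hk x = boundaryPt hk y) : x = y := by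
  unfold boundaryPt at h
  split_ifs at h <;> simp only [Subtype.mk.injEq, Prod.mk.injEq, Fin.mk.injEq] at h <;> omega

theorem adj_boundaryPt (hk : 3 ≤ k) {x y : ℕ}
    (h : x + 1 = y ∧ y < 4 * k - 4 ∨ x = 4 * k - 5 ∧ y = 0 ∨ IsRung k x y) :
    (graph k).Adj (boundaryPt hk x) (boundaryPt hk y) := by
  show (grid k k).Adj (boundaryPt hk x).1 (boundaryPt hk y).1
  unfold IsRung at h
  unfold boundaryPt
  split_ifs <;> dsimp only [grid] <;> omega

theorem exists_boundary_eq (hk : 3 ≤ k) (v : Vert k) : ∃ x < 4 * k - 4, boundary hk x = v := by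
  obtain ⟨⟨i, j⟩, hv⟩ := v
  have hv' : i.val ≤ 1 ∨ j.val ≤ 1 := hv
  have hi := i.2
  have hj := j.2
  obtain ⟨x, hx, hxi, hxj⟩ : ∃ x < 4 * k - 4,
      (boundaryPt hk x).1.1.val = i.val ∧ (boundaryPt hk x).1.2.val = j.val := by
    rcases (by omega : i.val = 0 ∨ 1 ≤ i.val ∧ j.val = 0 ∨ 1 ≤ i.val ∧ j.val = 1 ∨
      i.val = 1 ∧ 2 ≤ j.val) with h | h | h | h
    · refine ⟨k - 1 - j, by omega, ?_⟩
      unfold boundaryPt; split_ifs <;> dsimp only <;> omega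
    · refine ⟨k - 1 + i, by omega, ?_⟩
      unfold boundaryPt; split_ifs <;> dsimp only <;> omega
    · refine ⟨3 * k - 2 - i, by omega, ?_⟩
      unfold boundaryPt; split_ifs <;> dsimp only <;> omega
    · refine ⟨3 * k - 4 + j, by omega, ?_⟩
      unfold boundaryPt; split_ifs <;> dsimp only <;> omega
  refine ⟨x, hx, ?_⟩
  rw [boundary, Nat.mod_eq_of_lt hx]
  exact Subtype.ext (Prod.ext (Fin.ext hxi) (Fin.ext hxj))

theorem isCycleEmbedding_boundary (hk : 3 ≤ k) :
    (graph k).IsCycleEmbedding (4 * k - 4) (boundary hk) where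
  adj t := adj_boundaryPt hk (by
    have := Nat.mod_lt t (by omega : 0 < 4 * k - 4)
    have := add_one_mod_eq_or (by omega : 1 < 4 * k - 4) t
    generalize t % (4 * k - 4) = x at *
    generalize (t + 1) % (4 * k - 4) = y at *
    omega)
  eq_iff s t := ⟨boundaryPt_inj hk (Nat.mod_lt _ (by omega)) (Nat.mod_lt _ (by omega)),
    congrArg (boundaryPt hk)⟩
  three_le := by omega

theorem isChord_of_isRung (hk : 3 ≤ k) {x y : ℕ} (h : IsRung k x y) :
    IsChord (graph k) (boundary hk) x y := by
  unfold IsRung at h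
  have hx : x < 4 * k - 4 := by omega
  have hy : y < 4 * k - 4 := by omega
  refine (isCycleEmbedding_boundary hk).isChord_of_adj hx hy ?_ (by omega) (by omega)
    (by omega) (by omega)
  rw [boundary, boundary, Nat.mod_eq_of_lt hx, Nat.mod_eq_of_lt hy]
  exact adj_boundaryPt hk (by unfold IsRung; omega)

theorem exists_isRung_of_outer {x : ℕ} (h₁ : 1 ≤ x) (h₂ : x ≤ 2 * k - 3) (h₃ : x ≠ k - 1) :
    ∃ y, IsRung k x y ∧ (x ≤ k - 2 → y = 4 * k - 5 - x) ∧ (k ≤ x → y = 4 * k - 3 - x) := by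
  rcases Nat.lt_or_ge x k with h | h
  · exact ⟨4 * k - 5 - x, by unfold IsRung; omega, fun _ => rfl, by omega⟩
  · exact ⟨4 * k - 3 - x, by unfold IsRung; omega, by omega, fun _ => rfl⟩

theorem exists_isRung_of_inner {y : ℕ} (h₁ : 2 * k ≤ y) (h₂ : y ≤ 4 * k - 6) :
    ∃ x, IsRung k y x ∧ (3 * k - 3 ≤ y → x = 4 * k - 5 - y) ∧
      (y < 3 * k - 3 → x = 4 * k - 3 - y) := by
  rcases Nat.lt_or_ge y (3 * k - 3) with h | h
  · exact ⟨4 * k - 3 - y, by unfold IsRung; omega, by omega, fun _ => rfl⟩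
  · exact ⟨4 * k - 5 - y, by unfold IsRung; omega, fun _ => rfl, by omega⟩

/-- The interleaving configurations `a < c < b < d` in which no terminal has a rung beyond the
other pair. Both paths can then pass through `(1,1)`, at position `3k-3`. -/
def IsHubConfig (k a c b d : ℕ) : Prop :=
  a = 0 ∧ c = k - 1 ∧ k ≤ b ∧ b ≤ 3 * k - 4 ∧ d = 4 * k - 5 ∨
  a = 0 ∧ c = 2 * k - 2 ∧ b = 2 * k - 1 ∧ d = 4 * k - 5 ∨
  a ≤ k - 2 ∧ c = k - 1 ∧ b = 2 * k - 2 ∧ d = 2 * k - 1 ∨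
  a = k - 1 ∧ c = 2 * k - 2 ∧ b = 2 * k - 1 ∧ 3 * k - 2 ≤ d ∧ d ≤ 4 * k - 5

theorem hasUncrossingChord_of_inner_d {a c b d : ℕ} (hac : a < c) (hbd : b < d)
    (hc : c = k - 1 ∨ c = 2 * k - 2) (hbd' : 2 * k - 2 ≤ b ∨ 4 * k - 3 < b + d)
    (hd₁ : 2 * k ≤ d) (hd₂ : d ≤ 4 * k - 6) (ha : a ≠ k - 1 ∨ d < 3 * k - 3) :
    HasUncrossingChord (IsRung k) a c b d := by
  obtain ⟨r, hr, hr₁, hr₂⟩ := exists_isRung_of_inner hd₁ hd₂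
  by_cases har : a ≤ r
  · exact .at_d r hr har (by omega)
  · obtain ⟨s, hs, hs₁, hs₂⟩ :=
      exists_isRung_of_outer (k := k) (x := a) (by omega) (by omega) (by omega)
    exact .at_a s hs (by omega) (by omega)

theorem isHubConfig_or_hasUncrossingChord_of_corner {a b d : ℕ} (hac : a < k - 1)
    (hcb : k - 1 < b) (hbd : b < d) (hd : d < 4 * k - 4) :
    IsHubConfig k a (k - 1) b d ∨ HasUncrossingChord (IsRung k) a (k - 1) b d := by
  rcases (by omega : 3 * k - 3 ≤ b ∨ b ≤ 3 * k - 4 ∧ d = 4 * k - 5 ∨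
      b = 2 * k - 2 ∧ d = 2 * k - 1 ∨
      d ≤ 4 * k - 6 ∧ (b = 2 * k - 2 → d ≠ 2 * k - 1)) with hb | hbd' | hbd' | hbd'
  · obtain ⟨r, hr, hr₁, -⟩ := exists_isRung_of_inner (k := k) (y := b) (by omega) (by omega)
    exact .inr (.at_b r hr (by omega))
  · rcases Nat.eq_zero_or_pos a with rfl | ha
    · exact .inl (by unfold IsHubConfig; omega)
    · exact .inr (.at_a (4 * k - 5 - a) (by unfold IsRung; omega) (by omega) (by omega))
  · exact .inl (by unfold IsHubConfig; omega)
  rcases Nat.lt_or_ge b (2 * k - 2) with hb | hb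
  · obtain ⟨r, hr, -, hr₂⟩ :=
      exists_isRung_of_outer (k := k) (x := b) (by omega) (by omega) (by omega)
    by_cases hdr : d ≤ r
    · exact .inr (.at_b r hr (.inr hdr))
    · exact .inr (hasUncrossingChord_of_inner_d hac hbd (.inl rfl) (by omega) (by omega)
        hbd'.1 (by omega))
  · exact .inr (hasUncrossingChord_of_inner_d hac hbd (.inl rfl) (by omega) (by omega)
      hbd'.1 (by omega))

theorem isHubConfig_or_hasUncrossingChord_of_end {a b d : ℕ} (hac : a < 2 * k - 2)
    (hcb : 2 * k - 2 < b) (hbd : b < d) (hd : d < 4 * k - 4) :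
    IsHubConfig k a (2 * k - 2) b d ∨ HasUncrossingChord (IsRung k) a (2 * k - 2) b d := by
  rcases (by omega : 2 * k ≤ b ∨ b = 2 * k - 1) with hb | rfl
  · obtain ⟨r, hr, hr₁, hr₂⟩ := exists_isRung_of_inner (k := k) (y := b) (by omega) (by omega)
    exact .inr (.at_b r hr (by omega))
  by_cases hd' : d = 4 * k - 5
  · rcases (by omega : a = 0 ∨ a = k - 1 ∨ 1 ≤ a ∧ a ≤ k - 2 ∨ k ≤ a) with rfl | rfl | ha | ha
    · exact .inl (by unfold IsHubConfig; omega)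
    · exact .inl (by unfold IsHubConfig; omega)
    · exact .inr (.at_a (4 * k - 5 - a) (by unfold IsRung; omega) (by omega) (by omega))
    · exact .inr (.at_a (4 * k - 3 - a) (by unfold IsRung; omega) (by omega) (by omega))
  by_cases ha : a ≠ k - 1 ∨ d < 3 * k - 3
  · exact .inr (hasUncrossingChord_of_inner_d hac hbd (.inr rfl) (by omega) (by omega)
      (by omega) ha)
  rcases (by omega : d = 3 * k - 3 ∨ 3 * k - 2 ≤ d) with rfl | hd''
  · exact .inr (.at_d k (by unfold IsRung; omega) (by omega) (by omega))
  · exact .inl (by unfold IsHubConfig; omega)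

theorem isHubConfig_or_hasUncrossingChord (hk : 3 ≤ k) {a c b d : ℕ} (hac : a < c) (hcb : c < b)
    (hbd : b < d) (hd : d < 4 * k - 4) :
    IsHubConfig k a c b d ∨ HasUncrossingChord (IsRung k) a c b d := by
  rcases (by omega : 2 * k - 1 ≤ c ∨ c = k - 1 ∨ c = 2 * k - 2 ∨ c ≠ k - 1 ∧ c < 2 * k - 2)
    with hc | rfl | rfl | hc
  · obtain ⟨r, hr, hr₁, hr₂⟩ := exists_isRung_of_inner (k := k) (y := b) (by omega) (by omega)
    exact .inr (.at_b r hr (by omega))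
  · exact isHubConfig_or_hasUncrossingChord_of_corner hac hcb hbd hd
  · exact isHubConfig_or_hasUncrossingChord_of_end hac hcb hbd hd
  obtain ⟨r, hr, hr₁, hr₂⟩ := exists_isRung_of_outer (k := k) (x := c) (by omega) (by omega) hc.1
  by_cases hbr : b ≤ r
  · exact .inr (.at_c r hr (.inr hbr))
  -- the rungs are nested, so the rung at `b` lands before `c`
  obtain ⟨s, hs, hs₁, hs₂⟩ := exists_isRung_of_inner (k := k) (y := b) (by omega) (by omega)
  exact .inr (.at_b s hs (by omega))

theorem edgeDisjointWalks_of_isHubConfig (hk : 3 ≤ k) {a c b d : ℕ}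
    (h : IsHubConfig k a c b d) : (graph k).EdgeDisjointWalks (boundary hk a) (boundary hk b)
      (boundary hk c) (boundary hk d) := by
  have hC := isCycleEmbedding_boundary hk
  have hc₁ := isChord_of_isRung hk (x := k - 2) (y := 3 * k - 3) (by unfold IsRung; omega)
  have hc₂ := isChord_of_isRung hk (x := k) (y := 3 * k - 3) (by unfold IsRung; omega)
  rcases h with ⟨rfl, rfl, hb₁, hb₂, rfl⟩ | ⟨rfl, rfl, rfl, rfl⟩ | ⟨ha, rfl, rfl, rfl⟩ |
    ⟨rfl, rfl, rfl, hd₁, hd₂⟩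
  · exact hC.edgeDisjointWalks_of_hub (w := 0) (x₁ := 0) (x₂ := k - 1)
      (by dsimp only [List.Forall]; omega)
      (by omega) (by omega) (by omega) hc₁ hc₂ (by intro t; omega)
  · exact hC.edgeDisjointWalks_of_hub (w := 0) (x₁ := 0) (x₂ := 2 * k - 2)
      (by dsimp only [List.Forall]; omega)
      (by omega) (by omega) (by omega) hc₁ hc₂ (by intro t; omega)
  · -- the path from `a` back to `(1,1)` runs through the boundary edge `(0,k-1) – (1,k-1)`
    have := hC.edgeDisjointWalks_of_hub (w := k - 2) (x₁ := 2 * k - 2) (y₁ := a + (4 * k - 4))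
      (x₂ := k - 1) (y₂ := 2 * k - 1)
      (by dsimp only [List.Forall]; omega)
      (by omega) (by omega) (by omega) hc₂ hc₁ (by intro t; omega)
    rw [hC.apply_add_period] at this
    exact this.reverse_left
  · exact hC.edgeDisjointWalks_of_hub (w := 0) (x₁ := k - 1) (x₂ := 2 * k - 2)
      (by dsimp only [List.Forall]; omega)
      (by omega) (by omega) (by omega) hc₁ hc₂ (by intro t; omega)

theorem edgeDisjointWalks_of_crossing (hk : 3 ≤ k) {a c b d : ℕ} (hac : a < c) (hcb : c < b)
    (hbd : b < d) (hd : d < 4 * k - 4) :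
    (graph k).EdgeDisjointWalks (boundary hk a) (boundary hk b) (boundary hk c) (boundary hk d) :=
  (isHubConfig_or_hasUncrossingChord hk hac hcb hbd hd).elim (edgeDisjointWalks_of_isHubConfig hk)
    ((isCycleEmbedding_boundary hk).edgeDisjointWalks_of_hasUncrossingChord
      (fun _ _ h => ⟨by unfold IsRung at h; omega, isChord_of_isRung hk h⟩)
      hac.le hcb.le hbd.le hd)

end TwoRowsCols

open TwoRowsCols in
/-- for `k ≥ 3`, the subgraph of `Pk □ Pk` induced by the union of the
first two rows and first two columns is weakly 2-linked. -/
theorem firstTwoRowsCols_weakly2Linked (k : ℕ) (hk : 3 ≤ k) :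
    Weakly2Linked ((grid k k).induce {v : Fin k × Fin k | v.1.val ≤ 1 ∨ v.2.val ≤ 1}) := by
  refine weakly2Linked_of_edgeDisjointWalks fun u₁ v₁ u₂ v₂ => ?_
  obtain ⟨a, ha, rfl⟩ := exists_boundary_eq hk u₁
  obtain ⟨b, hb, rfl⟩ := exists_boundary_eq hk v₁
  obtain ⟨c, hc, rfl⟩ := exists_boundary_eq hk u₂
  obtain ⟨d, hd, rfl⟩ := exists_boundary_eq hk v₂
  exact (isCycleEmbedding_boundary hk).edgeDisjointWalks_of_forall_crossing
    (edgeDisjointWalks_of_crossing hk) ha hb hc hd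
end

section
/- Let Q0 be the 3×3 grid with the edges of the bottom row A removed, let b = (2,3) be the middle vertex of the right column, and let c = (1,1). Suppose T is a set of at most four distinct vertices of Q0 all lying in the top two rows (disjoint from A) with c ∉ T. Then for every s ∈ T there exist an s–b path in Q0 and pairwise edge-disjoint paths in Q0 from the remaining terminals of T to (not necessarily distinct) vertices of A, all these paths being pairwise edge-disjoint. -/
open SimpleGraph

/-- Vertices of the 3×3 grid. -/
abbrev V33 := Fin 3 × Fin 3

/-- Bottom row `A(3)` of the 3×3 grid (0-indexed: first coordinate = 2). -/
def A3 : Set V33 := {v | v.1 = 2}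

/-- `Q0`: the 3×3 grid with the two edges of the bottom row removed. -/
def Q0 : SimpleGraph V33 :=
  (grid 3 3).deleteEdges {s(((2, 0) : V33), ((2, 1) : V33)), s(((2, 1) : V33), ((2, 2) : V33))}

/-- The middle vertex of the right column. -/
def b0 : V33 := (1, 2)

/-- `Escapes T s`: there is an `s–b0` path in `Q0` together with mating paths from the
remaining terminals of `T` into the bottom row `A(3)`, all pairwise edge-disjoint. -/
def Escapes (T : Finset V33) (s : V33) : Prop :=
  ∃ (p : Q0.Walk s b0), p.IsPath ∧
    ∃ (a : V33 → V33) (q : (t : V33) → Q0.Walk t (a t)),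
      (∀ t ∈ T.erase s, a t ∈ A3 ∧ (q t).IsPath ∧ p.edges.Disjoint (q t).edges) ∧
      ∀ t ∈ T.erase s, ∀ t' ∈ T.erase s, t ≠ t' → (q t).edges.Disjoint (q t').edges

/-!
A vertex of `A3` has degree one in `Q0`, so mating paths ending in distinct vertices of `A3` use
distinct vertical edges `(1, j) – (2, j)`: at most three terminals besides `s` can escape.
The admissible terminals form the five-vertex set `terminalSites`, so `T` misses some
`u ∈ terminalSites` and it suffices to treat `T = terminalSites \ {u}`. For each of the twenty
pairs `(s, u)` an explicit linkage, written as vertex sequences, is checked by evaluation: `s`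
moves down to the middle row and then right to `b`, middle-row terminals drop straight into
`A3`, and top-row terminals are routed around what is left.
-/

instance (m k : ℕ) : DecidableRel (grid m k).Adj := fun _ _ =>
  inferInstanceAs (Decidable (_ = 1))

instance : DecidableRel Q0.Adj := fun u v =>
  decidable_of_iff ((grid 3 3).Adj u v ∧
      s(u, v) ∉ ({s((2, 0), (2, 1)), s((2, 1), (2, 2))} : Finset (Sym2 V33)))
    (by simp [Q0])

instance : DecidablePred (· ∈ A3) := fun v => inferInstanceAs (Decidable (v.1 = 2))

instance {α : Type*} [DecidableEq α] (l₁ l₂ : List α) : Decidable (l₁.Disjoint l₂) :=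
  decidable_of_iff (∀ a ∈ l₁, a ∉ l₂)
    ⟨fun h _ ha hb => h _ ha hb, fun h _ ha hb => h ha hb⟩

def List.sym2Steps {α : Type*} (l : List α) : List (Sym2 α) :=
  List.zipWith (s(·, ·)) l l.tail

theorem SimpleGraph.exists_isPath_edges_eq_sym2Steps {V : Type*} {G : SimpleGraph V}
    {l : List V} {u v : V} (hu : l.head? = some u) (hv : l.getLast? = some v)
    (hchain : l.IsChain G.Adj) (hnodup : l.Nodup) :
    ∃ p : G.Walk u v, p.IsPath ∧ p.edges = l.sym2Steps := by
  have hne : l ≠ [] := by rintro rfl; simp at hu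
  let p := Walk.ofSupport l hne hchain
  refine ⟨p.copy ?_ ?_, ?_, ?_⟩
  · simpa [List.head?_eq_some_head hne] using hu
  · simpa [List.getLast?_eq_some_getLast hne] using hv
  · simpa [Walk.isPath_def, p, Walk.support_ofSupport] using hnodup
  · simp [p, Walk.edges_eq_zipWith_support, Walk.support_ofSupport, List.sym2Steps]

theorem Escapes.mono {T T' : Finset V33} {s : V33} (hT : T ⊆ T') (h : Escapes T' s) :
    Escapes T s := by
  obtain ⟨p, hp, a, q, hq, hdisj⟩ := h
  have hsub := Finset.erase_subset_erase s hT
  exact ⟨p, hp, a, q, fun t ht => hq t (hsub ht),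
    fun t ht t' ht' => hdisj t (hsub ht) t' (hsub ht')⟩

def IsEscapeCertificate (T : Finset V33) (s : V33) (P : List V33) (R : List (List V33)) :
    Prop :=
  P.head? = some s ∧ P.getLast? = some b0 ∧ P.IsChain Q0.Adj ∧ P.Nodup ∧
  (∀ t ∈ T.erase s, ∃ l ∈ R, l.head? = some t) ∧
  (∀ l ∈ R, l.IsChain Q0.Adj ∧ l.Nodup ∧ (∃ a ∈ l.getLast?, a ∈ A3) ∧
    P.sym2Steps.Disjoint l.sym2Steps) ∧
  R.Pairwise fun l l' => l.sym2Steps.Disjoint l'.sym2Steps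

instance (T : Finset V33) (s : V33) (P : List V33) (R : List (List V33)) :
    Decidable (IsEscapeCertificate T s P R) := by
  unfold IsEscapeCertificate; infer_instance

theorem IsEscapeCertificate.escapes {T : Finset V33} {s : V33} {P : List V33}
    {R : List (List V33)} (h : IsEscapeCertificate T s P R) : Escapes T s := by
  obtain ⟨hs, hb, hPchain, hPnodup, hcover, hR, hpair⟩ := h
  obtain ⟨p, hp, hpe⟩ := exists_isPath_edges_eq_sym2Steps hs hb hPchain hPnodup
  have hroute : ∀ t, ∃ (a : V33) (q : Q0.Walk t a), t ∈ T.erase s →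
      a ∈ A3 ∧ q.IsPath ∧ ∃ l ∈ R, l.head? = some t ∧ q.edges = l.sym2Steps := by
    intro t
    by_cases ht : t ∈ T.erase s
    · obtain ⟨l, hl, hlt⟩ := hcover t ht
      obtain ⟨hchain, hnodup, ⟨a, ha, haA⟩, -⟩ := hR l hl
      obtain ⟨q, hq, hqe⟩ := exists_isPath_edges_eq_sym2Steps hlt ha hchain hnodup
      exact ⟨a, q, fun _ => ⟨haA, hq, l, hl, hlt, hqe⟩⟩
    · exact ⟨t, .nil, fun h => absurd h ht⟩
  choose a q hq using hroute
  refine ⟨p, hp, a, q, fun t ht => ?_, fun t ht t' ht' hne => ?_⟩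
  · obtain ⟨haA, hqpath, l, hl, -, hqe⟩ := hq t ht
    exact ⟨haA, hqpath, hpe ▸ hqe ▸ (hR l hl).2.2.2⟩
  · obtain ⟨-, -, l, hl, hlt, hqe⟩ := hq t ht
    obtain ⟨-, -, l', hl', hlt', hqe'⟩ := hq t' ht'
    have hll' : l ≠ l' := by
      rintro rfl
      exact hne (Option.some_injective _ (hlt.symm.trans hlt'))
    have : Std.Symm fun l l' : List V33 => l.sym2Steps.Disjoint l'.sym2Steps :=
      ⟨fun _ _ h => h.symm⟩
    rw [hqe, hqe']
    exact hpair.forall hl hl' hll'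

def terminalSites : Finset V33 := {(0, 1), (0, 2), (1, 0), (1, 1), (1, 2)}

theorem mem_terminalSites_of_notMem_A3 {t : V33} (hA : t ∉ A3) (hc : t ≠ (0, 0)) :
    t ∈ terminalSites := by
  revert t; simp only [A3, Set.mem_ofPred_eq]; decide

def linkRoute : V33 → List V33
  | (0, 1) => [(0, 1), (1, 1), (1, 2)]
  | (0, 2) => [(0, 2), (1, 2)]
  | (1, 0) => [(1, 0), (1, 1), (1, 2)]
  | (1, 1) => [(1, 1), (1, 2)]
  | _ => [(1, 2)]

def matingRoutes : V33 → V33 → List (List V33)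
  | (0, 1), (0, 2) => [[(1, 0), (2, 0)], [(1, 1), (2, 1)], [(1, 2), (2, 2)]]
  | (0, 1), (1, 0) => [[(0, 2), (0, 1), (0, 0), (1, 0), (2, 0)], [(1, 1), (2, 1)], [(1, 2), (2, 2)]]
  | (0, 1), (1, 1) =>
    [[(0, 2), (0, 1), (0, 0), (1, 0), (1, 1), (2, 1)], [(1, 0), (2, 0)], [(1, 2), (2, 2)]]
  | (0, 1), (1, 2) => [[(0, 2), (1, 2), (2, 2)], [(1, 0), (2, 0)], [(1, 1), (2, 1)]]
  | (0, 2), (0, 1) => [[(1, 0), (2, 0)], [(1, 1), (2, 1)], [(1, 2), (2, 2)]]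
  | (0, 2), (1, 0) => [[(0, 1), (0, 0), (1, 0), (2, 0)], [(1, 1), (2, 1)], [(1, 2), (2, 2)]]
  | (0, 2), (1, 1) => [[(0, 1), (1, 1), (2, 1)], [(1, 0), (2, 0)], [(1, 2), (2, 2)]]
  | (0, 2), (1, 2) => [[(0, 1), (1, 1), (1, 2), (2, 2)], [(1, 0), (2, 0)], [(1, 1), (2, 1)]]
  | (1, 0), (0, 1) => [[(0, 2), (0, 1), (0, 0), (1, 0), (2, 0)], [(1, 1), (2, 1)], [(1, 2), (2, 2)]]
  | (1, 0), (0, 2) => [[(0, 1), (0, 0), (1, 0), (2, 0)], [(1, 1), (2, 1)], [(1, 2), (2, 2)]]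
  | (1, 0), (1, 1) =>
    [[(0, 1), (0, 0), (1, 0), (2, 0)], [(0, 2), (0, 1), (1, 1), (2, 1)], [(1, 2), (2, 2)]]
  | (1, 0), (1, 2) => [[(0, 1), (0, 0), (1, 0), (2, 0)], [(0, 2), (1, 2), (2, 2)], [(1, 1), (2, 1)]]
  | (1, 1), (0, 1) => [[(0, 2), (0, 1), (1, 1), (2, 1)], [(1, 0), (2, 0)], [(1, 2), (2, 2)]]
  | (1, 1), (0, 2) => [[(0, 1), (1, 1), (2, 1)], [(1, 0), (2, 0)], [(1, 2), (2, 2)]]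
  | (1, 1), (1, 0) =>
    [[(0, 1), (0, 0), (1, 0), (2, 0)], [(0, 2), (0, 1), (1, 1), (2, 1)], [(1, 2), (2, 2)]]
  | (1, 1), (1, 2) => [[(0, 1), (1, 1), (2, 1)], [(0, 2), (1, 2), (2, 2)], [(1, 0), (2, 0)]]
  | (1, 2), (0, 1) => [[(0, 2), (1, 2), (2, 2)], [(1, 0), (2, 0)], [(1, 1), (2, 1)]]
  | (1, 2), (0, 2) => [[(0, 1), (0, 2), (1, 2), (2, 2)], [(1, 0), (2, 0)], [(1, 1), (2, 1)]]
  | (1, 2), (1, 0) => [[(0, 1), (0, 0), (1, 0), (2, 0)], [(0, 2), (1, 2), (2, 2)], [(1, 1), (2, 1)]]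
  | (1, 2), (1, 1) => [[(0, 1), (1, 1), (2, 1)], [(0, 2), (1, 2), (2, 2)], [(1, 0), (2, 0)]]
  | _, _ => []

theorem isEscapeCertificate_linkRoute_matingRoutes :
    ∀ s ∈ terminalSites, ∀ u ∈ terminalSites, s ≠ u →
      IsEscapeCertificate (terminalSites.erase u) s (linkRoute s) (matingRoutes s u) := by
  decide

/-- if `T` is a set of at most four vertices of `Q0` avoiding the bottom
row and the corner `c = (1,1)`, then every terminal of `T` can be linked to `b` while
the remaining terminals escape into the bottom row, all paths pairwise edge-disjoint. -/
theorem escape_top_terminals (T : Finset V33) (hcard : T.card ≤ 4)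
    (hA : ∀ t ∈ T, t ∉ A3) (hc : ((0, 0) : V33) ∉ T) :
    ∀ s ∈ T, Escapes T s := by
  have hT : T ⊆ terminalSites := fun t ht =>
    mem_terminalSites_of_notMem_A3 (hA t ht) (ne_of_mem_of_not_mem ht hc)
  obtain ⟨u, hu, huT⟩ : ∃ u ∈ terminalSites, u ∉ T :=
    Finset.exists_mem_notMem_of_card_lt_card (hcard.trans_lt (by decide))
  intro s hs
  have hcert := isEscapeCertificate_linkRoute_matingRoutes s (hT hs) u hu
    (ne_of_mem_of_not_mem hs huT)
  exact hcert.escapes.mono fun t ht => Finset.mem_erase.2 ⟨ne_of_mem_of_not_mem ht huT, hT ht⟩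
end

section
/- Let Q0 be the 3×3 grid with the edges of the bottom row A removed, b = (2,3). For the terminal set T1 = {(1,1), (2,1), (3,1)} (labelled s1=(1,1), s2=(2,1), s3=(3,1)), there is NO choice of an s3–b path in Q0 together with edge-disjoint paths from the other two terminals into A; but for s = s1 and for s = s2 such a configuration (an s–b path plus edge-disjoint mating paths from the remaining terminals of T1 into A, all pairwise edge-disjoint) exists. -/
open SimpleGraph

/-- The exceptional terminal set `T1` (the left column). -/
def T1 : Finset V33 := {((0, 0) : V33), (1, 0), (2, 0)}

/-! In `Q0` the terminal `s3` has the single neighbour `s2`, and the left column `T1` is joined to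
the rest of the graph by just two edges, `(1,1)(1,2)` and `(2,1)(2,2)` in the paper's coordinates.
An `s3–b` path uses the edge `s3 s2`, so the mating paths of `s1` and `s2` cannot end at `s3` and
must also leave the column: three edge-disjoint walks across a cut of two edges. For `s = s1, s2`
explicit paths work, the remaining terminal `s3` already lying in `A`. -/

namespace SimpleGraph.Walk

variable {V : Type*} {G : SimpleGraph V}

theorem exists_adj_mem_edges_of_mem_of_notMem {u v : V} (p : G.Walk u v) (S : Set V)
    (hu : u ∈ S) (hv : v ∉ S) : ∃ x ∈ S, ∃ y ∉ S, G.Adj x y ∧ s(x, y) ∈ p.edges := by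
  obtain ⟨d, hd, hfst, hsnd⟩ := p.exists_boundary_dart S hu hv
  exact ⟨d.fst, hfst, d.snd, hsnd, d.adj, List.mem_map_of_mem hd⟩

theorem mk_mem_edges_of_forall_adj_eq {x y v : V} (hy : ∀ w, G.Adj x w → w = y)
    (p : G.Walk x v) (hv : x ≠ v) : s(x, y) ∈ p.edges := by
  obtain ⟨w, hw, p', rfl⟩ := p.exists_eq_cons_of_ne hv
  obtain rfl := hy w hw
  simp

end SimpleGraph.Walk

theorem List.false_of_pairwise_disjoint_of_mem_pair {α : Type*} {l₁ l₂ l₃ : List α} {e₁ e₂ : α}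
    (h₁ : e₁ ∈ l₁ ∨ e₂ ∈ l₁) (h₂ : e₁ ∈ l₂ ∨ e₂ ∈ l₂) (h₃ : e₁ ∈ l₃ ∨ e₂ ∈ l₃)
    (h₁₂ : l₁.Disjoint l₂) (h₁₃ : l₁.Disjoint l₃) (h₂₃ : l₂.Disjoint l₃) : False := by
  rcases h₁ with h₁ | h₁ <;> rcases h₂ with h₂ | h₂ <;> rcases h₃ with h₃ | h₃ <;>
    first | exact h₁₂ h₁ h₂ | exact h₁₃ h₁ h₃ | exact h₂₃ h₂ h₃

instance inst_s10 : DecidableRel Q0.Adj := fun u v =>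
  decidable_of_iff ((((u.1 : ℤ) - v.1).natAbs + ((u.2 : ℤ) - v.2).natAbs = 1) ∧
      ¬(s(u, v) = s(((2, 0) : V33), ((2, 1) : V33)) ∨
        s(u, v) = s(((2, 1) : V33), ((2, 2) : V33)))) (by
    rw [Q0, deleteEdges_adj]
    simp [grid])

instance inst_s10_2 : DecidablePred (· ∈ A3) := fun v => decidable_of_iff (v.1 = 2) Iff.rfl

theorem Q0_adj_two_zero : ∀ w : V33, Q0.Adj (2, 0) w → w = (1, 0) := by decide

theorem Q0_adj_of_left_of_not_left : ∀ x y : V33, Q0.Adj x y → x.2 = 0 → y.2 ≠ 0 →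
    s(x, y) = s((0, 0), (0, 1)) ∨ s(x, y) = s((1, 0), (1, 1)) := by decide

theorem Q0_walk_leaves_left {u v : V33} (p : Q0.Walk u v) (hu : u.2 = 0) (hv : v.2 ≠ 0) :
    s((0, 0), (0, 1)) ∈ p.edges ∨ s((1, 0), (1, 1)) ∈ p.edges := by
  obtain ⟨x, hx, y, hy, hxy, hmem⟩ := p.exists_adj_mem_edges_of_mem_of_notMem {w | w.2 = 0} hu hv
  rcases Q0_adj_of_left_of_not_left x y hxy hx hy with h | h <;> rw [h] at hmem <;> simp [hmem]

theorem Q0_walk_to_two_zero {u : V33} (p : Q0.Walk u (2, 0)) (hu : u ≠ (2, 0)) :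
    s((1, 0), (2, 0)) ∈ p.edges := by
  have := p.reverse.mk_mem_edges_of_forall_adj_eq Q0_adj_two_zero hu.symm
  rw [Walk.edges_reverse, List.mem_reverse] at this
  rwa [Sym2.eq_swap]

theorem not_escapes_T1_two_zero : ¬ Escapes T1 (2, 0) := by
  rintro ⟨p, -, a, q, hq, hdisj⟩
  have hp_first : s((2, 0), (1, 0)) ∈ p.edges :=
    p.mk_mem_edges_of_forall_adj_eq Q0_adj_two_zero (by decide)
  have hq_leaves : ∀ t ∈ T1.erase (2, 0), s((0, 0), (0, 1)) ∈ (q t).edges ∨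
      s((1, 0), (1, 1)) ∈ (q t).edges := by
    intro t ht
    obtain ⟨ha, -, hpq⟩ := hq t ht
    have ht2 : t.2 = 0 := by
      have hT1 : ∀ t ∈ T1, t.2 = 0 := by decide
      exact hT1 t (Finset.mem_of_mem_erase ht)
    -- the only edge at `(2, 0)` is already used by `p`
    have ha_ne : a t ≠ (2, 0) := by
      intro h
      have := Q0_walk_to_two_zero ((q t).copy rfl h) (Finset.ne_of_mem_erase ht)
      rw [Walk.edges_copy, ← Sym2.eq_swap] at this
      exact hpq hp_first this
    exact Q0_walk_leaves_left (q t) ht2 fun h => ha_ne (Prod.ext ha h)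
  exact List.false_of_pairwise_disjoint_of_mem_pair (Q0_walk_leaves_left p rfl (by decide))
    (hq_leaves (0, 0) (by decide)) (hq_leaves (1, 0) (by decide))
    (hq _ (by decide)).2.2 (hq _ (by decide)).2.2 (hdisj _ (by decide) _ (by decide) (by decide))

theorem escapes_of_single {T : Finset V33} {s t a : V33} (hT : ∀ v ∈ T.erase s, v ≠ t → v ∈ A3)
    (p : Q0.Walk s b0) (hp : p.IsPath) (q : Q0.Walk t a) (ha : a ∈ A3) (hq : q.IsPath)
    (hpq : p.edges.Disjoint q.edges) : Escapes T s := by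
  refine ⟨p, hp, Function.update id t a,
    fun v => if h : v = t then q.copy h.symm (by simp [h]) else Walk.nil.copy rfl (by simp [h]),
    fun v hv => ?_, fun v hv v' hv' hne => ?_⟩
  · by_cases h : v = t
    · subst h
      simp [ha, hq, hpq]
    · simp [h, hT v hv h]
  · by_cases h : v = t
    · have h' : v' ≠ t := fun h' => hne (h.trans h'.symm)
      simp [h']
    · simp [h]

theorem escapes_T1_zero_zero : Escapes T1 (0, 0) :=
  escapes_of_single (t := (1, 0)) (by decide)
    (.cons (v := (0, 1)) (by decide) (.cons (v := (0, 2)) (by decide) (.cons (by decide) .nil)))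
    ((Walk.isPath_def _).2 (by decide))
    (.cons (v := (1, 1)) (by decide) (.cons (v := (2, 1)) (by decide) .nil))
    (by decide) ((Walk.isPath_def _).2 (by decide)) (List.disjoint_left.2 (by decide))

theorem escapes_T1_one_zero : Escapes T1 (1, 0) :=
  escapes_of_single (t := (0, 0)) (by decide)
    (.cons (v := (1, 1)) (by decide) (.cons (by decide) .nil)) ((Walk.isPath_def _).2 (by decide))
    (.cons (v := (1, 0)) (by decide) (.cons (v := (2, 0)) (by decide) .nil))
    (by decide) ((Walk.isPath_def _).2 (by decide)) (List.disjoint_left.2 (by decide))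

/-- for `T1` the terminal `s3 = (3,1)` cannot be linked to `b` with the
other terminals escaping into the bottom row, but `s1 = (1,1)` and `s2 = (2,1)` can. -/
theorem exceptional_T1 :
    ¬ Escapes T1 ((2, 0) : V33) ∧ Escapes T1 ((0, 0) : V33) ∧ Escapes T1 ((1, 0) : V33) :=
  ⟨not_escapes_T1_two_zero, escapes_T1_zero_zero, escapes_T1_one_zero⟩
end
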